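/- arXiv:1605.08525 — 2 statements merged into one kernel-verified Lean document; each statement's English description precedes it below -/
import Mathlib

section
/- Let (x_n) and (a_n) be sequences of positive reals with (a_n) bounded, and define h_n := (x_n + √(a_n³ + x_n²))^{1/3} + (x_n − √(a_n³ + x_n²))^{1/3} (real cube roots). If x_n = o(a_n^{3/2}) then h_n ~ (2/3) x_n/a_n as n → ∞, while if a_n = o(x_n^{2/3}) then h_n ~ (2 x_n)^{1/3}. -/
/-!
Cardano's formula: `h = cbrt (x + √(a³ + x²)) + cbrt (x - √(a³ + x²))` is the real root of
`h³ + 3 a h = 2 x`, since the two cube roots have product `cbrt (-a³) = -a`. For `x, a > 0` this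
root is positive, so both `3 a h ≤ 2 x` and `h³ ≤ 2 x`. Writing
`h / ((2/3) x / a) = (1 + h² / (3 a))⁻¹` and `h / (2 x)^{1/3} = (1 - (3/2) a h / x)^{1/3}`,
these bounds give `h² / a ≤ (4/9) (x / a^{3/2})²` and `a h / x ≤ 2^{1/3} a / x^{2/3}`,
so in either regime the correction term tends to `0`.
-/

open Filter Real

/-- The real cube root (negative reals get the negative real cube root). -/
noncomputable def cbrt (x : ℝ) : ℝ := if 0 ≤ x then x ^ ((1:ℝ)/3) else -((-x) ^ ((1:ℝ)/3))

open Topology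

noncomputable def cardanoRoot (x a : ℝ) : ℝ :=
  cbrt (x + Real.sqrt (a ^ 3 + x ^ 2)) + cbrt (x - Real.sqrt (a ^ 3 + x ^ 2))

lemma rpow_one_third_pow_three {y : ℝ} (hy : 0 ≤ y) : (y ^ ((1:ℝ)/3)) ^ 3 = y := by
  simpa [one_div] using Real.rpow_inv_natCast_pow hy (n := 3) three_ne_zero

lemma pow_three_rpow_one_third {y : ℝ} (hy : 0 ≤ y) : (y ^ 3) ^ ((1:ℝ)/3) = y := by
  simpa [one_div] using Real.pow_rpow_inv_natCast hy (n := 3) three_ne_zero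

lemma pow_three_cbrt (y : ℝ) : cbrt y ^ 3 = y := by
  unfold cbrt
  split_ifs with hy
  · exact rpow_one_third_pow_three hy
  · rw [neg_pow, rpow_one_third_pow_three (by linarith)]
    ring

lemma cbrt_pow_three (y : ℝ) : cbrt (y ^ 3) = y := by
  rcases le_or_gt 0 y with hy | hy
  · rw [cbrt, if_pos (by positivity), pow_three_rpow_one_third hy]
  · have hneg : ¬ 0 ≤ y ^ 3 := by
      have := pow_pos (neg_pos.2 hy) 3
      linarith [show (-y) ^ 3 = -y ^ 3 by ring]
    rw [cbrt, if_neg hneg, show -y ^ 3 = (-y) ^ 3 by ring,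
      pow_three_rpow_one_third (by linarith), neg_neg]

lemma cbrt_mul (u v : ℝ) : cbrt (u * v) = cbrt u * cbrt v := by
  rw [← cbrt_pow_three (cbrt u * cbrt v), mul_pow, pow_three_cbrt, pow_three_cbrt]

lemma cbrt_add_cbrt_pow_three (u v : ℝ) :
    (cbrt u + cbrt v) ^ 3 = u + v + 3 * cbrt (u * v) * (cbrt u + cbrt v) := by
  rw [cbrt_mul]
  linear_combination pow_three_cbrt u + pow_three_cbrt v

lemma cardanoRoot_cubic (x : ℝ) {a : ℝ} (ha : 0 ≤ a) :
    cardanoRoot x a ^ 3 + 3 * a * cardanoRoot x a = 2 * x := by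
  have hprod : (x + Real.sqrt (a ^ 3 + x ^ 2)) * (x - Real.sqrt (a ^ 3 + x ^ 2)) = (-a) ^ 3 := by
    linear_combination -Real.sq_sqrt (by positivity : 0 ≤ a ^ 3 + x ^ 2)
  rw [cardanoRoot, cbrt_add_cbrt_pow_three, hprod, cbrt_pow_three]
  ring

section Cubic

variable {h a x : ℝ}

lemma pos_of_cubic (ha : 0 < a) (hx : 0 < x) (hcubic : h ^ 3 + 3 * a * h = 2 * x) : 0 < h := by
  by_contra! hh
  have : h * (h ^ 2 + 3 * a) ≤ 0 := mul_nonpos_of_nonpos_of_nonneg hh (by positivity)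
  linarith [show h * (h ^ 2 + 3 * a) = h ^ 3 + 3 * a * h by ring]

lemma div_two_thirds_mul_div_eq_of_cubic (ha : 0 < a) (hx : 0 < x)
    (hcubic : h ^ 3 + 3 * a * h = 2 * x) :
    h / ((2/3) * x / a) = (1 + h ^ 2 / (3 * a))⁻¹ := by
  field_simp
  linear_combination hcubic

lemma sq_div_le_of_cubic (ha : 0 < a) (hh : 0 ≤ h) (hcubic : h ^ 3 + 3 * a * h = 2 * x) :
    h ^ 2 / (3 * a) ≤ 4/27 * (x / a ^ ((3:ℝ)/2)) ^ 2 := by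
  have hlin : 3 * a * h ≤ 2 * x := by nlinarith [pow_nonneg hh 3]
  have hpow : (a ^ ((3:ℝ)/2)) ^ 2 = a ^ 3 := by
    rw [← Real.rpow_natCast, ← Real.rpow_mul ha.le]
    norm_num
  rw [div_pow, hpow, mul_div_assoc', div_le_div_iff₀ (by positivity) (by positivity)]
  have hsq : (3 * a * h) ^ 2 ≤ (2 * x) ^ 2 := pow_le_pow_left₀ (by positivity) hlin 2
  nlinarith [mul_le_mul_of_nonneg_left hsq ha.le]

lemma div_rpow_one_third_eq {y : ℝ} (hh : 0 ≤ h) (hy : 0 ≤ y) :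
    h / y ^ ((1:ℝ)/3) = (h ^ 3 / y) ^ ((1:ℝ)/3) := by
  rw [Real.div_rpow (by positivity) hy, pow_three_rpow_one_third hh]

lemma pow_three_div_eq_of_cubic (hx : 0 < x) (hcubic : h ^ 3 + 3 * a * h = 2 * x) :
    h ^ 3 / (2 * x) = 1 - 3/2 * (a * h / x) := by
  field_simp
  linear_combination hcubic

lemma mul_div_le_of_cubic (ha : 0 ≤ a) (hh : 0 ≤ h) (hx : 0 < x)
    (hcubic : h ^ 3 + 3 * a * h = 2 * x) :
    a * h / x ≤ 2 ^ ((1:ℝ)/3) * (a / x ^ ((2:ℝ)/3)) := by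
  have hroot : h ≤ 2 ^ ((1:ℝ)/3) * x ^ ((1:ℝ)/3) := by
    rw [← Real.mul_rpow (by norm_num) hx.le, ← pow_three_rpow_one_third hh]
    exact Real.rpow_le_rpow (by positivity) (by nlinarith [mul_nonneg ha hh]) (by norm_num)
  have hsplit : x ^ ((1:ℝ)/3) * x ^ ((2:ℝ)/3) = x := by
    rw [← Real.rpow_add hx]
    norm_num
  have hx23 : 0 < x ^ ((2:ℝ)/3) := by positivity
  calc a * h / x ≤ a * (2 ^ ((1:ℝ)/3) * x ^ ((1:ℝ)/3)) / x := by gcongr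
    _ = 2 ^ ((1:ℝ)/3) * (a / x ^ ((2:ℝ)/3)) := by
      nth_rewrite 2 [← hsplit]
      field_simp

end Cubic

section Asymptotics

variable {ι : Type*} {l : Filter ι} {h a x : ι → ℝ}

theorem tendsto_div_two_thirds_mul_div_of_cubic (ha : ∀ n, 0 < a n) (hx : ∀ n, 0 < x n)
    (hcubic : ∀ n, h n ^ 3 + 3 * a n * h n = 2 * x n)
    (hs : Tendsto (fun n => x n / a n ^ ((3:ℝ)/2)) l (𝓝 0)) :
    Tendsto (fun n => h n / ((2/3) * x n / a n)) l (𝓝 1) := by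
  have hpos n := pos_of_cubic (ha n) (hx n) (hcubic n)
  have hsmall : Tendsto (fun n => h n ^ 2 / (3 * a n)) l (𝓝 0) := by
    refine squeeze_zero (fun n => div_nonneg (sq_nonneg _) (by linarith [ha n]))
      (fun n => sq_div_le_of_cubic (ha n) (hpos n).le (hcubic n)) ?_
    simpa using (hs.pow 2).const_mul (4/27)
  have hlim : Tendsto (fun n => (1 + h n ^ 2 / (3 * a n))⁻¹) l (𝓝 1) := by
    simpa using (hsmall.const_add 1).inv₀ (by norm_num)
  exact hlim.congr fun n => (div_two_thirds_mul_div_eq_of_cubic (ha n) (hx n) (hcubic n)).symm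

theorem tendsto_div_two_mul_rpow_one_third_of_cubic (ha : ∀ n, 0 < a n) (hx : ∀ n, 0 < x n)
    (hcubic : ∀ n, h n ^ 3 + 3 * a n * h n = 2 * x n)
    (hs : Tendsto (fun n => a n / x n ^ ((2:ℝ)/3)) l (𝓝 0)) :
    Tendsto (fun n => h n / (2 * x n) ^ ((1:ℝ)/3)) l (𝓝 1) := by
  have hpos n := pos_of_cubic (ha n) (hx n) (hcubic n)
  have hsmall : Tendsto (fun n => a n * h n / x n) l (𝓝 0) := by
    refine squeeze_zero (fun n => div_nonneg (mul_nonneg (ha n).le (hpos n).le) (hx n).le)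
      (fun n => mul_div_le_of_cubic (ha n).le (hpos n).le (hx n) (hcubic n)) ?_
    simpa using hs.const_mul (2 ^ ((1:ℝ)/3))
  have hcube : Tendsto (fun n => h n ^ 3 / (2 * x n)) l (𝓝 1) := by
    refine Tendsto.congr (fun n => (pow_three_div_eq_of_cubic (hx n) (hcubic n)).symm) ?_
    simpa using (hsmall.const_mul (3/2)).const_sub 1
  refine Tendsto.congr (fun n => (div_rpow_one_third_eq (hpos n).le (by linarith [hx n])).symm) ?_
  simpa using hcube.rpow_const (p := (1:ℝ)/3) (Or.inr (by norm_num))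

end Asymptotics

theorem stmt11_general (x a : ℕ → ℝ) (hx : ∀ n, 0 < x n) (ha : ∀ n, 0 < a n) :
    (Tendsto (fun n => x n / a n ^ ((3:ℝ)/2)) atTop (nhds 0) →
      Tendsto (fun n =>
        (cbrt (x n + Real.sqrt (a n ^ 3 + x n ^ 2))
          + cbrt (x n - Real.sqrt (a n ^ 3 + x n ^ 2)))
          / ((2/3) * x n / a n)) atTop (nhds 1))
    ∧ (Tendsto (fun n => a n / x n ^ ((2:ℝ)/3)) atTop (nhds 0) →
      Tendsto (fun n =>
        (cbrt (x n + Real.sqrt (a n ^ 3 + x n ^ 2))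
          + cbrt (x n - Real.sqrt (a n ^ 3 + x n ^ 2)))
          / (2 * x n) ^ ((1:ℝ)/3)) atTop (nhds 1)) := by
  have hcubic n := cardanoRoot_cubic (x n) (ha n).le
  exact ⟨tendsto_div_two_thirds_mul_div_of_cubic ha hx hcubic,
    tendsto_div_two_mul_rpow_one_third_of_cubic ha hx hcubic⟩

/-- Asymptotics of `h_n = (x_n + √(a_n³+x_n²))^{1/3} + (x_n - √(a_n³+x_n²))^{1/3}`:
`h_n ~ (2/3) x_n/a_n` when `x_n = o(a_n^{3/2})`, and `h_n ~ (2 x_n)^{1/3}`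
when `a_n = o(x_n^{2/3})`. -/
theorem stmt11 (x a : ℕ → ℝ) (hx : ∀ n, 0 < x n) (ha : ∀ n, 0 < a n)
    (hbdd : ∃ M : ℝ, ∀ n, a n ≤ M) :
    (Tendsto (fun n => x n / a n ^ ((3:ℝ)/2)) atTop (nhds 0) →
      Tendsto (fun n =>
        (cbrt (x n + Real.sqrt (a n ^ 3 + x n ^ 2))
          + cbrt (x n - Real.sqrt (a n ^ 3 + x n ^ 2)))
          / ((2/3) * x n / a n)) atTop (nhds 1))
    ∧ (Tendsto (fun n => a n / x n ^ ((2:ℝ)/3)) atTop (nhds 0) →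
      Tendsto (fun n =>
        (cbrt (x n + Real.sqrt (a n ^ 3 + x n ^ 2))
          + cbrt (x n - Real.sqrt (a n ^ 3 + x n ^ 2)))
          / (2 * x n) ^ ((1:ℝ)/3)) atTop (nhds 1)) :=
  stmt11_general x a hx ha
end

section
/- With ρ_n := ∏_{k=1}^n (2k)/(2k−1), γ_k := 1/k, and r_m satisfying |r_m| ≤ C₁/m² for all m ≥ 1, there exist constants C₃, C₄ > 0 such that for all 1 ≤ l < k ≤ n: (γ_k/ρ_{k−1}) Σ_{m=l}^{k−1} |r_m| ρ_m/√m ≤ C₃/(k^{3/2} l), and Σ_{k=l+1}^n (γ_k/ρ_{k−1}) Σ_{m=l}^{k−1} |r_m| ρ_m/√m ≤ C₄/l^{3/2}. -/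
/-!
Since `ρ_{n+1} = ρ_n (2n+2)/(2n+1)`, induction gives `2n + 1 ≤ ρ_n² ≤ 4n`, so `ρ_n ≍ √n`.
Hence each term of the inner sum is at most `2 C₁ / m²`, the inner sum is `O(1/l)`, and the
prefactor `γ_k / ρ_{k-1}` is at most `k^{-3/2}`. Summing the first bound over `k > l` and
comparing `Σ_{k>l} k^{-3/2}` with the telescoping sum of `2/√(k-1) - 2/√k` gives the second.
-/

open Real Finset

/-- The paper's `ρ_n`; it equals `4^n / (2n choose n)`. -/
noncomputable def wallisRatio (n : ℕ) : ℝ :=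
  ∏ k ∈ Icc 1 n, (2 * (k:ℝ)) / (2 * (k:ℝ) - 1)

namespace wallisRatio

lemma pos (n : ℕ) : 0 < wallisRatio n :=
  prod_pos fun k hk => by
    have hk : (1:ℝ) ≤ k := by exact_mod_cast (mem_Icc.1 hk).1
    apply div_pos <;> linarith

lemma succ (n : ℕ) : wallisRatio (n + 1) = wallisRatio n * ((2 * n + 2) / (2 * n + 1)) := by
  rw [wallisRatio, wallisRatio, prod_Icc_succ_top (by omega)]
  push_cast
  ring_nf

lemma two_mul_add_one_le_sq (n : ℕ) : 2 * (n:ℝ) + 1 ≤ wallisRatio n ^ 2 := by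
  induction n with
  | zero => simp [wallisRatio]
  | succ n ih =>
    rw [succ, mul_pow, div_pow, ← mul_div_assoc, le_div_iff₀ (by positivity)]
    push_cast
    calc (2 * ((n:ℝ) + 1) + 1) * (2 * n + 1) ^ 2
        ≤ (2 * n + 1) * (2 * n + 2) ^ 2 := by nlinarith
      _ ≤ wallisRatio n ^ 2 * (2 * n + 2) ^ 2 := by gcongr

lemma sq_le_four_mul {n : ℕ} (hn : 1 ≤ n) : wallisRatio n ^ 2 ≤ 4 * n := by
  induction n, hn using Nat.le_induction with
  | base => norm_num [wallisRatio]
  | succ n hn ih =>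
    have hn : (1:ℝ) ≤ n := by exact_mod_cast hn
    rw [succ, mul_pow, div_pow, ← mul_div_assoc, div_le_iff₀ (by positivity)]
    push_cast
    calc wallisRatio n ^ 2 * (2 * n + 2) ^ 2
        ≤ 4 * (n:ℝ) * (2 * n + 2) ^ 2 := by gcongr
      _ ≤ 4 * ((n:ℝ) + 1) * (2 * n + 1) ^ 2 := by nlinarith

lemma sqrt_succ_le (n : ℕ) : √((n:ℝ) + 1) ≤ wallisRatio n := by
  rw [sqrt_le_left (pos n).le]
  linarith [two_mul_add_one_le_sq n, (n.cast_nonneg : (0:ℝ) ≤ n)]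

lemma le_two_mul_sqrt {n : ℕ} (hn : 1 ≤ n) : wallisRatio n ≤ 2 * √n := by
  rw [← abs_of_pos (pos n), ← sqrt_sq_eq_abs, show (2:ℝ) = √(2 ^ 2) by simp,
    ← sqrt_mul (by norm_num)]
  exact sqrt_le_sqrt (by linarith [sq_le_four_mul hn])

end wallisRatio

lemma rpow_three_halves {x : ℝ} (hx : 0 ≤ x) : x ^ ((3:ℝ) / 2) = x * √x := by
  rw [show (3:ℝ) / 2 = 1 + 1 / 2 by norm_num, rpow_add' hx (by norm_num), rpow_one, sqrt_eq_rpow]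

lemma sum_Icc_inv_sq_le {l : ℕ} (hl : 1 ≤ l) (N : ℕ) :
    ∑ m ∈ Icc l N, ((m:ℝ) ^ 2)⁻¹ ≤ 2 / l := by
  have hIcc : Icc l N = Ioo (l - 1) (N + 1) := by ext m; simp only [mem_Icc, mem_Ioo]; omega
  have hcast : ((l - 1 : ℕ) : ℝ) + 1 = l := by rw [Nat.cast_sub hl]; ring
  rw [hIcc, ← hcast]
  exact sum_Ioo_inv_sq_le _ _

lemma inv_succ_mul_sqrt_succ_le {a : ℝ} (ha : 0 < a) :
    1 / ((a + 1) * √(a + 1)) ≤ 2 / √a - 2 / √(a + 1) := by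
  have hs : 0 < √a := sqrt_pos.2 ha
  have ht : 0 < √(a + 1) := sqrt_pos.2 (by linarith)
  have hs2 : √a ^ 2 = a := sq_sqrt ha.le
  have ht2 : √(a + 1) ^ 2 = a + 1 := sq_sqrt (by linarith)
  have hst : √a ≤ √(a + 1) := sqrt_le_sqrt (by linarith)
  rw [div_sub_div _ _ hs.ne' ht.ne', div_le_div_iff₀ (by positivity) (by positivity)]
  nlinarith [mul_pos hs ht, mul_pos (mul_pos hs ht) ht,
    mul_le_mul_of_nonneg_right hst (sq_nonneg (√(a + 1)))]

lemma sum_Icc_inv_rpow_three_halves_le {l : ℕ} (hl : 1 ≤ l) (n : ℕ) :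
    ∑ k ∈ Icc (l + 1) n, 1 / (k:ℝ) ^ ((3:ℝ) / 2) ≤ 2 / √l := by
  suffices h : ∀ n, l ≤ n →
      ∑ k ∈ Icc (l + 1) n, 1 / (k:ℝ) ^ ((3:ℝ) / 2) ≤ 2 / √l - 2 / √n by
    rcases le_total l n with hln | hnl
    · linarith [h n hln, (by positivity : 0 ≤ 2 / √(n:ℝ))]
    · rw [Icc_eq_empty (by omega), sum_empty]; positivity
  refine Nat.le_induction (by simp) fun n hn ih => ?_
  rw [sum_Icc_succ_top (by omega), rpow_three_halves (by positivity)]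
  have hn : (0:ℝ) < n := by exact_mod_cast (by omega : 0 < n)
  have := inv_succ_mul_sqrt_succ_le hn
  push_cast
  linarith

section InnerSum

variable {r : ℕ → ℝ} {C : ℝ} (hr : ∀ m : ℕ, 1 ≤ m → |r m| ≤ C / (m:ℝ) ^ 2)
include hr

lemma nonneg_of_abs_le_div_sq : 0 ≤ C := by
  simpa using (abs_nonneg _).trans (hr 1 le_rfl)

lemma abs_mul_wallisRatio_div_sqrt_le {m : ℕ} (hm : 1 ≤ m) :
    |r m| * wallisRatio m / √m ≤ 2 * C * ((m:ℝ) ^ 2)⁻¹ := by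
  have hsm : 0 < √(m:ℝ) := sqrt_pos.2 (by exact_mod_cast hm)
  rw [div_le_iff₀ hsm]
  calc |r m| * wallisRatio m ≤ C / (m:ℝ) ^ 2 * (2 * √m) :=
        mul_le_mul (hr m hm) (wallisRatio.le_two_mul_sqrt hm) (wallisRatio.pos m).le
          ((abs_nonneg _).trans (hr m hm))
    _ = 2 * C * ((m:ℝ) ^ 2)⁻¹ * √m := by ring

lemma sum_abs_mul_wallisRatio_div_sqrt_le {l : ℕ} (hl : 1 ≤ l) (N : ℕ) :
    ∑ m ∈ Icc l N, |r m| * wallisRatio m / √m ≤ 4 * C / l := by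
  have hC := nonneg_of_abs_le_div_sq hr
  calc ∑ m ∈ Icc l N, |r m| * wallisRatio m / √m
      ≤ ∑ m ∈ Icc l N, 2 * C * ((m:ℝ) ^ 2)⁻¹ :=
        sum_le_sum fun m hm => abs_mul_wallisRatio_div_sqrt_le hr (hl.trans (mem_Icc.1 hm).1)
    _ ≤ 2 * C * (2 / l) := by rw [← mul_sum]; gcongr; exact sum_Icc_inv_sq_le hl N
    _ = 4 * C / l := by ring

lemma weighted_sum_abs_mul_wallisRatio_div_sqrt_le {l k : ℕ} (hl : 1 ≤ l) (hlk : l < k) :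
    1 / (k:ℝ) / wallisRatio (k - 1) * ∑ m ∈ Icc l (k - 1), |r m| * wallisRatio m / √m
      ≤ 4 * C / ((k:ℝ) ^ ((3:ℝ) / 2) * l) := by
  have hk : (0:ℝ) < k := by exact_mod_cast (by omega : 0 < k)
  have hρ : √(k:ℝ) ≤ wallisRatio (k - 1) := by
    simpa [Nat.cast_sub (by omega : 1 ≤ k)] using wallisRatio.sqrt_succ_le (k - 1)
  have hS := sum_abs_mul_wallisRatio_div_sqrt_le hr hl (k - 1)
  have hS0 : 0 ≤ ∑ m ∈ Icc l (k - 1), |r m| * wallisRatio m / √m :=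
    sum_nonneg fun m _ =>
      div_nonneg (mul_nonneg (abs_nonneg _) (wallisRatio.pos m).le) (sqrt_nonneg _)
  calc 1 / (k:ℝ) / wallisRatio (k - 1) * ∑ m ∈ Icc l (k - 1), |r m| * wallisRatio m / √m
      ≤ 1 / k / √k * (4 * C / l) := by gcongr
    _ = 4 * C / ((k:ℝ) ^ ((3:ℝ) / 2) * l) := by rw [rpow_three_halves hk.le]; field_simp

lemma sum_weighted_sum_abs_mul_wallisRatio_div_sqrt_le {l : ℕ} (hl : 1 ≤ l) (n : ℕ) :
    ∑ k ∈ Icc (l + 1) n,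
        1 / (k:ℝ) / wallisRatio (k - 1) * ∑ m ∈ Icc l (k - 1), |r m| * wallisRatio m / √m
      ≤ 8 * C / (l:ℝ) ^ ((3:ℝ) / 2) := by
  have hC := nonneg_of_abs_le_div_sq hr
  have hl0 : (0:ℝ) < l := by exact_mod_cast hl
  calc _ ≤ ∑ k ∈ Icc (l + 1) n, 4 * C / l * (1 / (k:ℝ) ^ ((3:ℝ) / 2)) :=
        sum_le_sum fun k hk => (weighted_sum_abs_mul_wallisRatio_div_sqrt_le hr hl
          (by have := (mem_Icc.1 hk).1; omega)).trans_eq (by ring)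
    _ ≤ 4 * C / l * (2 / √l) := by
        rw [← mul_sum]; gcongr; exact sum_Icc_inv_rpow_three_halves_le hl n
    _ = 8 * C / (l:ℝ) ^ ((3:ℝ) / 2) := by rw [rpow_three_halves hl0.le]; field_simp; ring

end InnerSum

/-- Summation bounds: with `ρ_n = ∏_{k=1}^n (2k)/(2k-1)`, `γ_k = 1/k` and `|r_m| ≤ C₁/m²`,
there are `C₃, C₄ > 0` such that
`(γ_k/ρ_{k-1}) Σ_{m=l}^{k-1} |r_m| ρ_m/√m ≤ C₃/(k^{3/2} l)` and
`Σ_{k=l+1}^n (γ_k/ρ_{k-1}) Σ_{m=l}^{k-1} |r_m| ρ_m/√m ≤ C₄/l^{3/2}`. -/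
theorem stmt15 (r : ℕ → ℝ) (C₁ : ℝ) (hC₁ : 0 < C₁)
    (hr : ∀ m : ℕ, 1 ≤ m → |r m| ≤ C₁ / (m:ℝ) ^ 2) :
    let ρ : ℕ → ℝ := fun n => ∏ k ∈ Finset.Icc 1 n, (2 * (k:ℝ)) / (2 * (k:ℝ) - 1)
    let γ : ℕ → ℝ := fun k => 1 / (k:ℝ)
    ∃ C₃ C₄ : ℝ, 0 < C₃ ∧ 0 < C₄ ∧
      (∀ l k : ℕ, 1 ≤ l → l < k →
        γ k / ρ (k - 1) * ∑ m ∈ Finset.Icc l (k - 1), |r m| * ρ m / Real.sqrt m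
          ≤ C₃ / ((k:ℝ) ^ ((3:ℝ)/2) * (l:ℝ)))
      ∧ ∀ n l : ℕ, 1 ≤ l →
        ∑ k ∈ Finset.Icc (l + 1) n,
            γ k / ρ (k - 1) * ∑ m ∈ Finset.Icc l (k - 1), |r m| * ρ m / Real.sqrt m
          ≤ C₄ / (l:ℝ) ^ ((3:ℝ)/2) := by
  intro ρ γ
  exact ⟨4 * C₁, 8 * C₁, by positivity, by positivity,
    fun l k hl hlk => weighted_sum_abs_mul_wallisRatio_div_sqrt_le hr hl hlk,
    fun n l hl => sum_weighted_sum_abs_mul_wallisRatio_div_sqrt_le hr hl n⟩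
end
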